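/- For fixed k ∈ ℝ³ with k ≠ 0 and the map G₀(e, b) = (k ∧ b, −k ∧ e) on ℂ³ × ℂ³: if G₀(e,b) = ω(e,b) with ω ≠ 0 real, then ω = |k| or ω = −|k|, and each of these eigenvalues has a two-dimensional eigenspace. -/

import Mathlib

open Matrix

/-- The Maxwell symbol `G₀(e,b) = (k ∧ b, −k ∧ e)` on `ℂ³ × ℂ³`, for `k ∈ ℝ³`. -/
noncomputable def G0 (k : Fin 3 → ℝ) :
    ((Fin 3 → ℂ) × (Fin 3 → ℂ)) →ₗ[ℂ] ((Fin 3 → ℂ) × (Fin 3 → ℂ)) :=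
  ((crossProduct (fun i => (k i : ℂ))).comp
      (LinearMap.snd ℂ (Fin 3 → ℂ) (Fin 3 → ℂ))).prod
    (-(crossProduct (fun i => (k i : ℂ))).comp
      (LinearMap.fst ℂ (Fin 3 → ℂ) (Fin 3 → ℂ)))

lemma cross_cross_self (a v : Fin 3 → ℂ) :
    crossProduct a (crossProduct a v) = (a ⬝ᵥ v) • a - (a ⬝ᵥ a) • v := by
  funext i
  fin_cases i <;>
    simp [cross_apply, dotProduct, Fin.sum_univ_three, Pi.smul_apply, smul_eq_mul] <;> ring

-- the dot-with-kc functional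
noncomputable def dotK (a : Fin 3 → ℂ) : (Fin 3 → ℂ) →ₗ[ℂ] ℂ where
  toFun v := a ⬝ᵥ v
  map_add' u v := by simp [dotProduct_add]
  map_smul' c v := by simp [dotProduct_smul]

lemma finrank_ker_dotK (a : Fin 3 → ℂ) (ha : a ≠ 0) :
    Module.finrank ℂ (LinearMap.ker (dotK a)) = 2 := by
  have hsurj : Function.Surjective (dotK a) := by
    obtain ⟨i, hi⟩ : ∃ i, a i ≠ 0 := by
      by_contra h; push_neg at h; exact ha (funext h)
    intro z
    refine ⟨fun j => if j = i then z / a i else 0, ?_⟩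
    simp [dotK, dotProduct, Fin.sum_univ_three]
    fin_cases i <;> simp <;>
      (rw [mul_comm]; exact div_mul_cancel₀ _ (by simpa using hi))
  have h1 : Module.finrank ℂ (LinearMap.range (dotK a)) = 1 := by
    rw [LinearMap.range_eq_top.mpr hsurj]; simp
  have h2 := LinearMap.finrank_range_add_finrank_ker (dotK a)
  rw [h1] at h2
  have h3 : Module.finrank ℂ (Fin 3 → ℂ) = 3 := by simp
  omega

lemma finrank_eig (k : Fin 3 → ℝ) (hk : k ≠ 0) (c : ℂ) (hc : c ≠ 0)
    (hc2 : c * c = (fun i => (k i : ℂ)) ⬝ᵥ (fun i => (k i : ℂ))) :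
    Module.finrank ℂ (LinearMap.ker (G0 k - c • LinearMap.id)) = 2 := by
  set a : Fin 3 → ℂ := fun i => (k i : ℂ) with ha
  have hane : a ≠ 0 := by
    intro h; apply hk; funext i
    have := congrFun h i
    simpa [ha] using this
  -- the embedding b ↦ (c⁻¹ • (a ×₃ b), b)
  set F : (Fin 3 → ℂ) →ₗ[ℂ] ((Fin 3 → ℂ) × (Fin 3 → ℂ)) :=
    (c⁻¹ • crossProduct a).prod LinearMap.id with hF
  have hFinj : Function.Injective F := by
    intro x y h
    have := congrArg Prod.snd h
    simpa [hF] using this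
  have hker : LinearMap.ker (G0 k - c • LinearMap.id) =
      (LinearMap.ker (dotK a)).map F := by
    ext ⟨e, b⟩
    simp only [LinearMap.mem_ker, Submodule.mem_map, LinearMap.sub_apply,
      LinearMap.smul_apply, LinearMap.id_apply, sub_eq_zero]
    constructor
    · intro h
      have h1 : crossProduct a b = c • e := congrArg Prod.fst h
      have h2 : -(crossProduct a e) = c • b := congrArg Prod.snd h
      have hab : a ⬝ᵥ b = 0 := by
        have : a ⬝ᵥ (c • b) = 0 := by
          rw [← h2]; simp [dot_self_cross]
        rw [dotProduct_smul] at this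
        exact (smul_eq_zero.mp this).resolve_left hc
      refine ⟨b, by simpa [dotK] using hab, ?_⟩
      simp only [hF, LinearMap.prod_apply, LinearMap.coe_smul, Function.prod,
        LinearMap.id_apply, Pi.smul_apply]
      refine Prod.ext ?_ rfl
      simp only [h1]
      rw [smul_smul, inv_mul_cancel₀ hc, one_smul]
    · rintro ⟨v, hv, hveq⟩
      have hav : a ⬝ᵥ v = 0 := hv
      rw [← hveq]
      simp only [hF, LinearMap.prod_apply, Function.prod, LinearMap.smul_apply,
        LinearMap.id_apply]
      have key : crossProduct a (c⁻¹ • crossProduct a v) = -(c • v) := by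
        rw [LinearMap.map_smul, cross_cross_self, hav, zero_smul, zero_sub, ← hc2, smul_neg,
          smul_smul, inv_mul_cancel_left₀ hc]
      refine Prod.ext ?_ ?_
      · show crossProduct a v = c • (c⁻¹ • crossProduct a v)
        rw [smul_smul, mul_inv_cancel₀ hc, one_smul]
      · show -(crossProduct a (c⁻¹ • crossProduct a v)) = c • v
        rw [key, neg_neg]
  have heq := LinearEquiv.finrank_eq
    (Submodule.equivMapOfInjective F hFinj (LinearMap.ker (dotK a)))
  rw [hker, ← heq]
  exact finrank_ker_dotK a hane

/-- For `k ≠ 0`: any nonzero real eigenvalue `ω` of `G₀` equals `|k|` or `−|k|`, and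
each of the eigenvalues `±|k|` has a two-dimensional eigenspace. -/
theorem stmt4 (k : Fin 3 → ℝ) (hk : k ≠ 0) (ω : ℝ) (hω : ω ≠ 0)
    (e b : Fin 3 → ℂ) (heb : (e, b) ≠ 0)
    (heig : G0 k (e, b) = (ω : ℂ) • (e, b)) :
    (ω = Real.sqrt (k ⬝ᵥ k) ∨ ω = -Real.sqrt (k ⬝ᵥ k)) ∧
    Module.finrank ℂ
      (LinearMap.ker (G0 k - (Real.sqrt (k ⬝ᵥ k) : ℂ) • LinearMap.id)) = 2 ∧
    Module.finrank ℂ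
      (LinearMap.ker (G0 k - (-(Real.sqrt (k ⬝ᵥ k)) : ℂ) • LinearMap.id)) = 2 := by
  set a : Fin 3 → ℂ := fun i => (k i : ℂ) with ha
  have hωc : (ω : ℂ) ≠ 0 := by exact_mod_cast hω
  have h1 : crossProduct a b = (ω : ℂ) • e := congrArg Prod.fst heig
  have h2 : -(crossProduct a e) = (ω : ℂ) • b := congrArg Prod.snd heig
  have hae : a ⬝ᵥ e = 0 := by
    have : a ⬝ᵥ ((ω : ℂ) • e) = 0 := by rw [← h1]; exact dot_self_cross a b
    rw [dotProduct_smul] at this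
    exact (smul_eq_zero.mp this).resolve_left hωc
  have hab : a ⬝ᵥ b = 0 := by
    have : a ⬝ᵥ ((ω : ℂ) • b) = 0 := by
      rw [← h2, dotProduct_neg, dot_self_cross, neg_zero]
    rw [dotProduct_smul] at this
    exact (smul_eq_zero.mp this).resolve_left hωc
  have haa : a ⬝ᵥ a = ((k ⬝ᵥ k : ℝ) : ℂ) := by
    simp [ha, dotProduct, Fin.sum_univ_three]
  -- ω² = |k|²
  have hsq : (ω : ℂ) * ω = a ⬝ᵥ a := by
    have hb' : crossProduct a (crossProduct a b) = (ω : ℂ) • crossProduct a e := by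
      rw [h1, LinearMap.map_smul]
    rw [cross_cross_self, hab, zero_smul, zero_sub] at hb'
    have he' : crossProduct a e = -((ω : ℂ) • b) := by rw [← h2]; ring_nf
    rw [he', smul_neg, smul_smul] at hb'
    have hb2 : ((a ⬝ᵥ a) - (ω:ℂ) * ω) • b = 0 := by
      rw [sub_smul, neg_inj.mp hb', sub_self]
    have he2c : crossProduct a (crossProduct a e) = -((ω : ℂ) • crossProduct a b) := by
      rw [he', LinearMap.map_neg, LinearMap.map_smul]
    rw [cross_cross_self, hae, zero_smul, zero_sub, h1, smul_smul] at he2c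
    have he2 : ((a ⬝ᵥ a) - (ω:ℂ) * ω) • e = 0 := by
      rw [sub_smul, neg_inj.mp he2c, sub_self]
    have hne : (a ⬝ᵥ a) - (ω:ℂ)*ω = 0 := by
      by_contra hne
      apply heb
      have hb0 : b = 0 := (smul_eq_zero.mp hb2).resolve_left hne
      have he0 : e = 0 := (smul_eq_zero.mp he2).resolve_left hne
      simp [hb0, he0, Prod.ext_iff]
    linear_combination -hne
  have hkk : (0:ℝ) ≤ k ⬝ᵥ k :=
    Finset.sum_nonneg fun i _ => mul_self_nonneg (k i)
  have hωr : ω * ω = k ⬝ᵥ k := by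
    have : ((ω * ω : ℝ) : ℂ) = ((k ⬝ᵥ k : ℝ) : ℂ) := by push_cast; rw [hsq, haa]
    exact_mod_cast this
  have hs : Real.sqrt (k ⬝ᵥ k) * Real.sqrt (k ⬝ᵥ k) = k ⬝ᵥ k := Real.mul_self_sqrt hkk
  have hev : ω = Real.sqrt (k ⬝ᵥ k) ∨ ω = -Real.sqrt (k ⬝ᵥ k) := by
    exact mul_self_eq_mul_self_iff.mp (by rw [hωr, hs])
  have hsne : Real.sqrt (k ⬝ᵥ k) ≠ 0 := by
    intro h
    apply hω
    rcases hev with h' | h' <;> rw [h', h] <;> ring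
  have hcs : ((Real.sqrt (k ⬝ᵥ k) : ℝ) : ℂ) * ((Real.sqrt (k ⬝ᵥ k) : ℝ) : ℂ)
      = a ⬝ᵥ a := by rw [haa]; exact_mod_cast hs
  refine ⟨hev, ?_, ?_⟩
  · exact finrank_eig k hk _ (by exact_mod_cast hsne) hcs
  · refine finrank_eig k hk _ ?_ ?_
    · simpa using (show ((Real.sqrt (k ⬝ᵥ k):ℝ):ℂ) ≠ 0 by exact_mod_cast hsne)
    · push_cast
      rw [neg_mul_neg]
      exact_mod_cast hcs
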